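/- Let R be a commutative ring with unity of characteristic 0 and G a group such that the set RG⁺ of symmetric elements of RG is Lie metabelian, and let A = ⟨g ∈ G : g² = 1⟩. Then for every x ∈ G, either x commutes with every element of A, or x² ∈ A. -/

import Mathlib

/-- A subset `X` of a ring is Lie metabelian if `[[a,b],[c,d]] = 0` for all `a,b,c,d ∈ X`,
where `[a,b] = a*b - b*a`. -/
def IsLieMetabelianSet {S : Type*} [Ring S] (X : Set S) : Prop :=
  ∀ a ∈ X, ∀ b ∈ X, ∀ c ∈ X, ∀ d ∈ X,
    (a * b - b * a) * (c * d - d * c) - (c * d - d * c) * (a * b - b * a) = 0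

/-- A subset `X` of a ring is commutative if its elements commute pairwise. -/
def IsCommutativeSet {S : Type*} [Ring S] (X : Set S) : Prop :=
  ∀ a ∈ X, ∀ b ∈ X, a * b = b * a

/-- The set `RG⁺` of symmetric elements of the group ring `RG` with respect to the classical
involution determined by `g ↦ g⁻¹`: an element `α = Σ α_g g` is symmetric iff `α(g⁻¹) = α(g)`
for all `g ∈ G`. -/
def symmetricSet (R G : Type*) [CommRing R] [Group G] : Set (MonoidAlgebra R G) :=
  {α | ∀ g : G, α.coeff g⁻¹ = α.coeff g}

/-- The set `Ǧ = {g - g⁻¹ : g ∈ G}` inside the group ring `RG`. -/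
def checkSet (R G : Type*) [CommRing R] [Group G] : Set (MonoidAlgebra R G) :=
  {x | ∃ g : G, x = MonoidAlgebra.of R G g - MonoidAlgebra.of R G g⁻¹}

/-!
If `x` commutes with every involution, it centralizes `A`. Otherwise take an involution `g` with
`x g ≠ g x` and the symmetric elements `g`, `g x + (g x)⁻¹ = g x + x⁻¹ g` and `x + x⁻¹`. Their
double commutator is twice
`x g x + x⁻² g + g x⁻² + g x g x g - x² g - x⁻¹ g x⁻¹ - g x⁻¹ g x⁻¹ g - g x²`,
and the word `x g x` can only cancel against a negative word. Each such coincidence forces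
`x g = g x` or `x² ∈ A` (because `g x²` resp. `(g x⁻¹)²` is then an involution), so the coefficient
of `x g x` is a positive integer, which is nonzero in characteristic zero.
-/

open MonoidAlgebra Subgroup

section Involutions

variable {G : Type*} [Group G] {g x : G}

theorem conj_mem_closure_sq_eq_one (hg : g ^ 2 = 1) (a : G) :
    a * g * a⁻¹ ∈ closure {g : G | g ^ 2 = 1} :=
  subset_closure (show (a * g * a⁻¹) ^ 2 = 1 by rw [conj_pow, hg, mul_one, mul_inv_cancel])

theorem sq_mem_closure_of_mul_mul_eq_inv_mul_mul_inv (hg : g ^ 2 = 1)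
    (h : x * g * x = x⁻¹ * g * x⁻¹) : x ^ 2 ∈ closure {g : G | g ^ 2 = 1} := by
  have hgx : (g * x ^ 2) ^ 2 = 1 :=
    calc (g * x ^ 2) ^ 2 = g * x * (x * g * x) * x := by rw [sq, sq]; group
      _ = g ^ 2 := by rw [h, sq]; group
      _ = 1 := hg
  have hgA : g⁻¹ ∈ closure {g : G | g ^ 2 = 1} := inv_mem (subset_closure hg)
  simpa using mul_mem hgA (subset_closure hgx : g * x ^ 2 ∈ closure {g : G | g ^ 2 = 1})

theorem sq_mem_closure_of_mul_mul_eq_mul_inv_mul_mul_inv_mul (hg : g ^ 2 = 1)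
    (h : x * g * x = g * x⁻¹ * g * x⁻¹ * g) : x ^ 2 ∈ closure {g : G | g ^ 2 = 1} := by
  have hy : ((g * x⁻¹) ^ 2) ^ 2 = 1 :=
    calc ((g * x⁻¹) ^ 2) ^ 2 = (g * x⁻¹ * g * x⁻¹ * g) * x⁻¹ * g * x⁻¹ := by
          rw [sq, sq]; group
      _ = x * g ^ 2 * x⁻¹ := by rw [← h, sq]; group
      _ = 1 := by rw [hg, mul_one, mul_inv_cancel]
  have hg' : g⁻¹ ^ 2 = 1 := by rw [inv_pow, hg, inv_one]
  have hx2_inv : (x ^ 2)⁻¹ = x⁻¹ * g⁻¹ * x⁻¹⁻¹ * g⁻¹ * (g * x⁻¹) ^ 2 := by simp only [sq]; group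
  rw [← inv_mem_iff, hx2_inv]
  exact mul_mem (mul_mem (conj_mem_closure_sq_eq_one hg' _) (subset_closure hg'))
    (subset_closure hy)

theorem mul_comm_of_mem_closure {s : Set G} (hs : ∀ g ∈ s, x * g = g * x) :
    ∀ a ∈ closure s, x * a = a * x := by
  have : x ∈ centralizer (closure s : Set G) := by
    rw [centralizer_closure, mem_centralizer_iff]
    exact fun g hg => (hs g hg).symm
  exact fun a ha => (mem_centralizer_iff.1 this a ha).symm

end Involutions

section GroupRing

variable {R G : Type*} [CommRing R] [Group G]

theorem coeff_sum_map_of [DecidableEq G] (l : List G) (t : G) :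
    (l.map (of R G)).sum.coeff t = l.count t := by
  induction l with
  | nil => simp
  | cons a l ih =>
    simp only [List.map_cons, List.sum_cons, coeff_add, Finsupp.add_apply, ih, List.count_cons,
      of_apply, coeff_single, Finsupp.single_apply, beq_iff_eq]
    split_ifs <;> simp [add_comm]

theorem nsmul_sub_sum_map_of_ne_zero [CharZero R] {n : ℕ} (hn : n ≠ 0) {P N : List G} {t : G}
    (hP : t ∈ P) (hN : t ∉ N) :
    n • ((P.map (of R G)).sum - (N.map (of R G)).sum) ≠ 0 := by
  classical
  intro h
  have := congrArg (fun f : MonoidAlgebra R G => f.coeff t) h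
  simp only [coeff_smul, coeff_sub, Finsupp.smul_apply, Finsupp.sub_apply, coeff_sum_map_of,
    List.count_eq_zero.2 hN, coeff_zero, Finsupp.zero_apply] at this
  rw [Nat.cast_zero, sub_zero, nsmul_eq_mul, ← Nat.cast_mul, Nat.cast_eq_zero] at this
  exact mul_ne_zero hn (List.count_pos_iff.2 hP).ne' this

theorem of_add_of_inv_mem_symmetricSet (g : G) : of R G g + of R G g⁻¹ ∈ symmetricSet R G := by
  classical
  intro t
  simp only [coeff_add, Finsupp.add_apply, of_apply, coeff_single, Finsupp.single_apply,
    ← inv_eq_iff_eq_inv, inv_inv]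
  exact add_comm _ _

theorem of_mem_symmetricSet_of_sq_eq_one {g : G} (hg : g ^ 2 = 1) :
    of R G g ∈ symmetricSet R G := by
  classical
  intro t
  simp only [of_apply, coeff_single, Finsupp.single_apply, ← inv_eq_iff_eq_inv,
    inv_eq_of_mul_eq_one_right (sq g ▸ hg : g * g = 1)]

theorem lie_lie_of_sq_eq_one {g : G} (hg : g ^ 2 = 1) (x : G) :
    ⁅⁅of R G g, of R G (g * x) + of R G (g * x)⁻¹⁆, ⁅of R G g, of R G x + of R G x⁻¹⁆⁆ =
      2 • (([x * g * x, x⁻¹ * x⁻¹ * g, g * x⁻¹ * x⁻¹, g * x * g * x * g].map (of R G)).sum -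
        ([x * x * g, x⁻¹ * g * x⁻¹, g * x⁻¹ * g * x⁻¹ * g, g * x * x].map (of R G)).sum) := by
  have hgg : g * g = 1 := sq g ▸ hg
  have hgg' (y : G) : g * (g * y) = y := by rw [← mul_assoc, hgg, one_mul]
  simp only [Ring.lie_def, mul_inv_rev, inv_eq_of_mul_eq_one_right hgg, List.map_cons,
    List.sum_cons, List.map_nil, List.sum_nil, add_zero, mul_add, add_mul, mul_sub, sub_mul,
    ← map_mul, mul_assoc, hgg, hgg', inv_mul_cancel_left, mul_inv_cancel_left, mul_inv_cancel,
    inv_mul_cancel, mul_one]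
  abel

theorem lie_lie_ne_zero_of_mul_ne_mul [CharZero R] {g x : G} (hg : g ^ 2 = 1)
    (hxg : x * g ≠ g * x) (hx2 : x ^ 2 ∉ closure {g : G | g ^ 2 = 1}) :
    ⁅⁅of R G g, of R G (g * x) + of R G (g * x)⁻¹⁆, ⁅of R G g, of R G x + of R G x⁻¹⁆⁆ ≠ 0 := by
  rw [lie_lie_of_sq_eq_one hg]
  refine nsmul_sub_sum_map_of_ne_zero two_ne_zero List.mem_cons_self ?_
  simp only [List.mem_cons, List.not_mem_nil, or_false, not_or]
  refine ⟨fun h => hxg (mul_left_cancel (by rwa [mul_assoc, mul_assoc] at h)).symm,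
    fun h => hx2 (sq_mem_closure_of_mul_mul_eq_inv_mul_mul_inv hg h),
    fun h => hx2 (sq_mem_closure_of_mul_mul_eq_mul_inv_mul_mul_inv_mul hg h),
    fun h => hxg (mul_right_cancel h)⟩

end GroupRing

theorem central_on_A_or_sq_mem_A (R G : Type*) [CommRing R] [CharZero R] [Group G]
    (hmeta : IsLieMetabelianSet (symmetricSet R G)) (x : G) :
    (∀ a ∈ Subgroup.closure {g : G | g ^ 2 = 1}, x * a = a * x) ∨
      x ^ 2 ∈ Subgroup.closure {g : G | g ^ 2 = 1} := by
  refine or_iff_not_imp_right.2 fun hx2 => mul_comm_of_mem_closure fun g hg => ?_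
  by_contra hxg
  have hg' := of_mem_symmetricSet_of_sq_eq_one (R := R) hg
  have := hmeta _ hg' _ (of_add_of_inv_mem_symmetricSet (g * x)) _ hg' _
    (of_add_of_inv_mem_symmetricSet x)
  exact lie_lie_ne_zero_of_mul_ne_mul hg hxg hx2 (by simpa only [Ring.lie_def] using this)
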